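/- arXiv:1003.0183 — 2 statements merged into one kernel-verified Lean document; each statement's English description precedes it below -/
import Mathlib

section
/- Let T be a triangulated category admitting countable coproducts, equipped with a monoidal structure with tensor product ⊗ and unit object 1 such that, for every object B of T, the functors (- ⊗ B) and (B ⊗ -) are triangulated (i.e., commute with the shift and send distinguished triangles to distinguished triangles) and preserve countable coproducts. If the smallest localizing subcategory of T containing the unit object 1 is all of T, then every localizing subcategory L of T is a ⊗-ideal: for every A in L and every B in T, the object A ⊗ B belongs to L. -/
open CategoryTheory Limits Pretriangulated MonoidalCategory

universe v u

/-- A localizing subcategory of a triangulated category `T` admitting countable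
coproducts, described as a set of objects: it is closed under isomorphisms, shifts,
the formation of cones of triangles (two-out-of-three for distinguished triangles),
countable coproducts, and retracts. -/
structure IsLocalizingSubcategory (T : Type u) [Category.{v} T] [HasZeroObject T]
    [Preadditive T] [HasShift T ℤ] [∀ n : ℤ, (shiftFunctor T n).Additive]
    [Pretriangulated T] (S : Set T) : Prop where
  mem_of_iso : ∀ {X Y : T}, (X ≅ Y) → X ∈ S → Y ∈ S
  shift_mem : ∀ (X : T) (n : ℤ), X ∈ S → X⟦n⟧ ∈ S
  mem_of_triangle : ∀ D : Triangle T, D ∈ (distTriang T) →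
    D.obj₁ ∈ S → D.obj₂ ∈ S → D.obj₃ ∈ S
  coproduct_mem : ∀ (ι : Type) [Countable ι] (f : ι → T) [HasCoproduct f],
    (∀ i, f i ∈ S) → (∐ f) ∈ S
  retract_mem : ∀ {X Y : T} (i : X ⟶ Y) (r : Y ⟶ X), i ≫ r = 𝟙 X → Y ∈ S → X ∈ S

/-!
Fix `A ∈ L`. The objects `B` with `A ⊗ B ∈ L` form the preimage of `L` under the
triangulated, coproduct-preserving functor `A ⊗ -`, hence a localizing subcategory; it
contains `𝟙_ T` because `A ⊗ 𝟙_ T ≅ A`, so by the generation hypothesis it is everything.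
-/

namespace IsLocalizingSubcategory

variable {C : Type*} {D : Type*} [Category C] [Category D]
  [HasZeroObject C] [HasZeroObject D] [Preadditive C] [Preadditive D]
  [HasShift C ℤ] [HasShift D ℤ]
  [∀ n : ℤ, (shiftFunctor C n).Additive] [∀ n : ℤ, (shiftFunctor D n).Additive]
  [Pretriangulated C] [Pretriangulated D]

theorem preimage (F : C ⥤ D) [F.CommShift ℤ] [F.IsTriangulated]
    [hF : ∀ (ι : Type) [Countable ι], PreservesColimitsOfShape (Discrete ι) F]
    {S : Set D} (hS : IsLocalizingSubcategory D S) :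
    IsLocalizingSubcategory C (F.obj ⁻¹' S) where
  mem_of_iso e hX := hS.mem_of_iso (F.mapIso e) hX
  shift_mem X n hX := hS.mem_of_iso ((F.commShiftIso n).symm.app X) (hS.shift_mem _ n hX)
  mem_of_triangle T hT h₁ h₂ := hS.mem_of_triangle _ (F.map_distinguished T hT) h₁ h₂
  coproduct_mem ι _ f _ hf := by
    have : HasCoproduct (fun i ↦ F.obj (f i)) :=
      hasColimit_of_iso (Discrete.compNatIsoDiscrete f F).symm
    exact hS.mem_of_iso (PreservesCoproduct.iso F f).symm (hS.coproduct_mem ι _ hf)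
  retract_mem i r hir hY :=
    hS.retract_mem (F.map i) (F.map r) (by rw [← F.map_comp, hir, F.map_id]) hY

end IsLocalizingSubcategory

/-- Let `T` be a triangulated category admitting countable coproducts, equipped with a
monoidal structure such that tensoring on either side with any object is a triangulated
functor preserving countable coproducts. If the smallest localizing subcategory of `T`
containing the tensor unit is all of `T`, then every localizing subcategory `L` of `T`
is a `⊗`-ideal: `A ⊗ B ∈ L` for all `A ∈ L` and all `B` in `T`. -/
theorem localizing_subcategory_tensor_ideal
    (T : Type u) [Category.{v} T] [HasZeroObject T] [Preadditive T]
    [HasShift T ℤ] [∀ n : ℤ, (shiftFunctor T n).Additive] [Pretriangulated T]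
    [IsTriangulated T] [HasCountableCoproducts T] [MonoidalCategory T]
    [∀ B : T, (tensorLeft B).CommShift ℤ] [∀ B : T, (tensorRight B).CommShift ℤ]
    [∀ B : T, (tensorLeft B).IsTriangulated] [∀ B : T, (tensorRight B).IsTriangulated]
    [∀ (B : T) (ι : Type) [Countable ι], PreservesColimitsOfShape (Discrete ι) (tensorLeft B)]
    [∀ (B : T) (ι : Type) [Countable ι], PreservesColimitsOfShape (Discrete ι) (tensorRight B)]
    (hgen : ∀ S : Set T, IsLocalizingSubcategory T S → (𝟙_ T) ∈ S → S = Set.univ)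
    (L : Set T) (hL : IsLocalizingSubcategory T L) :
    ∀ A ∈ L, ∀ B : T, A ⊗ B ∈ L := by
  intro A hA B
  have hunit : 𝟙_ T ∈ (tensorLeft A).obj ⁻¹' L := hL.mem_of_iso (ρ_ A).symm hA
  -- instance search cannot discharge a `∀ ι [Countable ι], …` goal, so it is supplied by hand
  have hpre := hL.preimage (tensorLeft A) (hF := fun _ _ ↦ inferInstance)
  exact Set.eq_univ_iff_forall.mp (hgen _ hpre hunit) B
end

section
/- Let T be a triangulated category admitting countable coproducts. Then every full triangulated subcategory of T that is closed under isomorphisms and under countable coproducts is automatically closed under retracts: if A ⊕ B belongs to the subcategory, then so does A. -/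
open CategoryTheory Limits Pretriangulated

universe v u

/-!
Write `e = r ≫ i`, so that informally `X = A ⊕ B` with `A` the image of `e`. On `C = ∐ₙ X`
(informally `A ⊕ B ⊕ A ⊕ B ⊕ ⋯`), the map `swindleUp` fixes every copy of `B` and moves the
`n`-th copy of `A` to the `(n+1)`-st; it is split by `swindleDown`, and the copy of `A` it misses
is recovered by `swindleProj`. This Eilenberg swindle gives `C ≅ C ⊞ A`. Hence `C ∈ S`,
`C ⊞ A ∈ S`, and the split triangle `C ⟶ C ⊞ A ⟶ A ⟶ C⟦1⟧` puts `A` in `S`.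
-/

namespace CategoryTheory.Retract

variable {C : Type*} [Category C] [Preadditive C] {A X : C} (h : Retract A X)
  [HasCoproduct fun _ : ℕ => X]

noncomputable def swindleUp : (∐ fun _ : ℕ => X) ⟶ ∐ fun _ : ℕ => X :=
  Limits.Sigma.desc fun n =>
    (𝟙 X - h.r ≫ h.i) ≫ Limits.Sigma.ι (fun _ : ℕ => X) n +
      h.r ≫ h.i ≫ Limits.Sigma.ι (fun _ : ℕ => X) (n + 1)

noncomputable def swindleDown : (∐ fun _ : ℕ => X) ⟶ ∐ fun _ : ℕ => X :=
  Limits.Sigma.desc fun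
    | 0 => (𝟙 X - h.r ≫ h.i) ≫ Limits.Sigma.ι (fun _ : ℕ => X) 0
    | n + 1 => (𝟙 X - h.r ≫ h.i) ≫ Limits.Sigma.ι (fun _ : ℕ => X) (n + 1) +
      h.r ≫ h.i ≫ Limits.Sigma.ι (fun _ : ℕ => X) n

noncomputable def swindleProj : (∐ fun _ : ℕ => X) ⟶ A :=
  Limits.Sigma.desc fun
    | 0 => h.r
    | _ + 1 => 0

theorem swindleUp_comp_swindleDown : h.swindleUp ≫ h.swindleDown = 𝟙 _ := by
  ext (_ | n) <;> simp [swindleUp, swindleDown, Preadditive.sub_comp, Preadditive.comp_sub]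

theorem swindleUp_comp_swindleProj : h.swindleUp ≫ h.swindleProj = 0 := by
  ext (_ | n) <;> simp [swindleUp, swindleProj, Preadditive.sub_comp]

theorem swindle_total :
    h.swindleDown ≫ h.swindleUp + h.swindleProj ≫ h.i ≫ Limits.Sigma.ι (fun _ : ℕ => X) 0 =
      𝟙 _ := by
  ext (_ | n) <;>
    simp [swindleUp, swindleDown, swindleProj, Preadditive.sub_comp, Preadditive.comp_add]

noncomputable def swindleBicone : BinaryBicone (∐ fun _ : ℕ => X) A where
  pt := ∐ fun _ : ℕ => X
  fst := h.swindleDown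
  snd := h.swindleProj
  inl := h.swindleUp
  inr := h.i ≫ Limits.Sigma.ι (fun _ : ℕ => X) 0
  inl_fst := h.swindleUp_comp_swindleDown
  inl_snd := h.swindleUp_comp_swindleProj
  inr_fst := by simp [swindleDown, Preadditive.comp_sub]
  inr_snd := by simp [swindleProj]

noncomputable def isBilimitSwindleBicone : h.swindleBicone.IsBilimit :=
  isBinaryBilimitOfTotal _ h.swindle_total

noncomputable def sigmaConstIsoBiprod [HasBinaryBiproduct (∐ fun _ : ℕ => X) A] :
    (∐ fun _ : ℕ => X) ≅ (∐ fun _ : ℕ => X) ⊞ A :=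
  biprod.uniqueUpToIso _ _ h.isBilimitSwindleBicone

end CategoryTheory.Retract

/-- In a triangulated category `T` admitting countable coproducts, every full
triangulated subcategory (given as a set `S` of objects closed under isomorphisms,
shifts, and the two-out-of-three property for distinguished triangles) which is closed
under countable coproducts is automatically closed under retracts: if `X ∈ S` and `A`
is a retract of `X` (so, in particular, if `X ≅ A ⊕ B`), then `A ∈ S`. -/
theorem triangulated_subcategory_closed_under_retracts
    (T : Type u) [Category.{v} T] [HasZeroObject T] [Preadditive T]
    [HasShift T ℤ] [∀ n : ℤ, (shiftFunctor T n).Additive] [Pretriangulated T]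
    [IsTriangulated T] [HasCountableCoproducts T]
    (S : Set T)
    (hiso : ∀ {X Y : T}, (X ≅ Y) → X ∈ S → Y ∈ S)
    (hshift : ∀ (X : T) (n : ℤ), X ∈ S → X⟦n⟧ ∈ S)
    (htriangle : ∀ D : Triangle T, D ∈ (distTriang T) →
      D.obj₁ ∈ S → D.obj₂ ∈ S → D.obj₃ ∈ S)
    (hcoprod : ∀ (ι : Type) [Countable ι] (f : ι → T) [HasCoproduct f],
      (∀ i, f i ∈ S) → (∐ f) ∈ S) :
    ∀ {A X : T} (i : A ⟶ X) (r : X ⟶ A), i ≫ r = 𝟙 A → X ∈ S → A ∈ S := by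
  intro A X i r hir hX
  let h : Retract A X := ⟨i, r, hir⟩
  have hC : (∐ fun _ : ℕ => X) ∈ S := hcoprod ℕ _ fun _ => hX
  have hCA : ((∐ fun _ : ℕ => X) ⊞ A) ∈ S := hiso h.sigmaConstIsoBiprod hC
  exact htriangle _ (binaryBiproductTriangle_distinguished _ A) hC hCA
end
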